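/- arXiv:1609.05661 — 6 statements merged into one kernel-verified Lean document; each statement's English description precedes it below -/
import Mathlib

section
/- Let f_1, …, f_n be gambles on a finite nonempty set Ω and let M̂ = {p : Ω → ℝ : ⟨p, f_i⟩ ≥ 0 for all i = 1, …, n}. Then the set D = {g : Ω → ℝ : ⟨p, g⟩ ≥ 0 for every p ∈ M̂} equals the positive hull {Σ_{i=1}^n α_i f_i : α_i ≥ 0 for all i} of the gambles f_1, …, f_n. -/
open scoped BigOperators

/-- Inner product of gambles: `⟨f,g⟩ = ∑ x, f x * g x`. -/
noncomputable def ip {Ω : Type*} [Fintype Ω] (f g : Ω → ℝ) : ℝ := ∑ x, f x * g x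

/-!
The positive hull `K` of `f 1, …, f n` is closed: by Carathéodory's theorem for cones (repeatedly
cancelling a linear dependence among the generators in use) every point of `K` lies in the cone
over a linearly independent subfamily, which is the image of a closed orthant under an injective
linear map. Farkas' lemma, i.e. Hahn–Banach separation of a point from the closed cone `K`, then
gives for every `g ∉ K` a functional `⟨p, ·⟩` that is nonnegative on each `f i` and negative at `g`.
The reverse inclusion is the linearity of `⟨p, ·⟩`.
-/

open Function Set PointedCone
open scoped NNReal

section Caratheodory

variable {ι V : Type*} [Fintype ι] [AddCommGroup V] [Module ℝ V] {f : ι → V}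

lemma exists_sum_smul_eq_zero_of_not_linearIndepOn {s : Set ι}
    (hdep : ¬LinearIndepOn ℝ f s) :
    ∃ c : ι → ℝ, support c ⊆ s ∧ ∑ i, c i • f i = 0 ∧ ∃ j, 0 < c j := by
  classical
  rw [linearIndepOn_iff'] at hdep
  push Not at hdep
  obtain ⟨t, g, hts, hsum, j, hjt, hgj⟩ := hdep
  set c : ι → ℝ := fun i => if i ∈ t then g i else 0
  have hc_supp : support c ⊆ s := fun i hi => hts (by_contra fun h => hi (if_neg h))
  have hc_sum : ∑ i, c i • f i = 0 := by
    simpa [c, ite_smul, Finset.sum_ite_mem] using hsum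
  have hcj : c j ≠ 0 := by simpa [c, hjt] using hgj
  rcases hcj.lt_or_gt with hneg | hpos
  · exact ⟨-c, by rwa [support_neg], by simp [neg_smul, Finset.sum_neg_distrib, hc_sum],
      j, neg_pos.2 hneg⟩
  · exact ⟨c, hc_supp, hc_sum, j, hpos⟩

/-- Subtracting from `α` the largest multiple `m • c` of a dependence relation `c` that keeps all
coefficients nonnegative kills the coefficient where `α i / c i` is minimal over `c i > 0`. -/
lemma exists_nonneg_sum_smul_eq_support_ssubset {α : ι → ℝ} (hα : ∀ i, 0 ≤ α i)
    (hdep : ¬LinearIndepOn ℝ f (support α)) :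
    ∃ β : ι → ℝ, (∀ i, 0 ≤ β i) ∧ ∑ i, β i • f i = ∑ i, α i • f i ∧ support β ⊂ support α := by
  obtain ⟨c, hc_supp, hc_sum, j, hj⟩ := exists_sum_smul_eq_zero_of_not_linearIndepOn hdep
  obtain ⟨i₀, hi₀, hi₀_min⟩ := (Finset.univ.filter fun i => 0 < c i).exists_min_image
    (fun i => α i / c i) ⟨j, by simpa using hj⟩
  rw [Finset.mem_filter] at hi₀
  set m := α i₀ / c i₀
  have hm : 0 ≤ m := div_nonneg (hα i₀) hi₀.2.le
  refine ⟨fun i => α i - m * c i, fun i => ?_, ?_, ?_⟩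
  · rcases le_or_gt (c i) 0 with hci | hci
    · nlinarith [hα i]
    · have := hi₀_min i (by simpa using hci)
      rw [le_div_iff₀ hci] at this
      linarith
  · simp [sub_smul, Finset.sum_sub_distrib, mul_smul, ← Finset.smul_sum, hc_sum]
  · refine (Set.ssubset_iff_of_subset fun i hi => ?_).2 ⟨i₀, hc_supp hi₀.2.ne', ?_⟩
    · by_contra hαi
      have hci : c i = 0 := by_contra fun h => hαi (hc_supp h)
      exact hi (by simp [hci, notMem_support.1 hαi])
    · simp [m, hi₀.2.ne']

theorem exists_nonneg_sum_smul_eq_linearIndepOn_support (α : ι → ℝ) (hα : ∀ i, 0 ≤ α i) :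
    ∃ β : ι → ℝ, (∀ i, 0 ≤ β i) ∧ ∑ i, β i • f i = ∑ i, α i • f i ∧
      LinearIndepOn ℝ f (support β) := by
  induction h : (support α).ncard using Nat.strong_induction_on generalizing α with
  | _ k ih =>
    by_cases hli : LinearIndepOn ℝ f (support α)
    · exact ⟨α, hα, rfl, hli⟩
    obtain ⟨β, hβ, hβα, hss⟩ := exists_nonneg_sum_smul_eq_support_ssubset hα hli
    obtain ⟨γ, hγ, hγβ, hγ_li⟩ := ih _ (h ▸ ncard_lt_ncard hss) β hβ rfl
    exact ⟨γ, hγ, hγβ.trans hβα, hγ_li⟩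

end Caratheodory

section Hull

variable {ι V : Type*} [AddCommGroup V] [Module ℝ V]

lemma mem_hull_range_iff [Fintype ι] {f : ι → V} {x : V} :
    x ∈ hull ℝ (range f) ↔ ∃ α : ι → ℝ, (∀ i, 0 ≤ α i) ∧ x = ∑ i, α i • f i := by
  change x ∈ Submodule.span ℝ≥0 (range f) ↔ _
  rw [Submodule.mem_span_range_iff_exists_fun]
  constructor
  · rintro ⟨c, rfl⟩
    exact ⟨fun i => c i, fun i => (c i).2, rfl⟩
  · rintro ⟨α, hα, rfl⟩
    exact ⟨fun i => ⟨α i, hα i⟩, rfl⟩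

variable [TopologicalSpace V] [IsTopologicalAddGroup V] [ContinuousSMul ℝ V] [T2Space V]

lemma isClosed_hull_range_of_linearIndependent [Finite ι] {f : ι → V}
    (hf : LinearIndependent ℝ f) : IsClosed (hull ℝ (range f) : Set V) := by
  have := Fintype.ofFinite ι
  have himage :
      (hull ℝ (range f) : Set V) = Fintype.linearCombination ℝ f '' Ici (0 : ι → ℝ) := by
    ext x
    simp [mem_hull_range_iff, Fintype.linearCombination_apply, eq_comm, Pi.le_def]
  rw [himage]
  exact (LinearMap.isClosedEmbedding_of_injective
    (LinearMap.ker_eq_bot.mpr hf.fintypeLinearCombination_injective)).isClosedMap _ isClosed_Ici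

theorem isClosed_hull_range [Finite ι] (f : ι → V) : IsClosed (hull ℝ (range f) : Set V) := by
  have := Fintype.ofFinite ι
  have hunion : (hull ℝ (range f) : Set V) =
      ⋃ (s : Set ι) (_ : LinearIndepOn ℝ f s), (hull ℝ (f '' s) : Set V) := by
    refine Subset.antisymm (fun x hx => ?_) (iUnion₂_subset fun s _ =>
      Submodule.span_mono (R := ℝ≥0) (image_subset_range f s))
    obtain ⟨α, hα, rfl⟩ := mem_hull_range_iff.1 hx
    obtain ⟨β, hβ, hβα, hβ_li⟩ := exists_nonneg_sum_smul_eq_linearIndepOn_support (f := f) α hα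
    refine mem_iUnion₂.2 ⟨_, hβ_li, hβα ▸ Submodule.sum_mem _ fun i _ => ?_⟩
    by_cases hi : β i = 0
    · simp [hi]
    · exact (hull ℝ _).smul_mem (hβ i) (subset_hull (mem_image_of_mem f hi))
  rw [hunion]
  refine isClosed_iUnion_of_finite fun s => isClosed_iUnion_of_finite fun hs => ?_
  rw [image_eq_range]
  exact isClosed_hull_range_of_linearIndependent hs

theorem exists_nonneg_dual_of_notMem_hull_range [Finite ι] [LocallyConvexSpace ℝ V] (f : ι → V)
    {x : V} (hx : x ∉ hull ℝ (range f)) :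
    ∃ φ : StrongDual ℝ V, (∀ i, 0 ≤ φ (f i)) ∧ φ x < 0 := by
  obtain ⟨φ, hφ, hφx⟩ :=
    ProperCone.hyperplane_separation_point ⟨hull ℝ (range f), isClosed_hull_range f⟩ hx
  exact ⟨φ, fun i => hφ _ (subset_hull (mem_range_self i)), hφx⟩

end Hull

section Gambles

variable {Ω : Type*} [Fintype Ω]

lemma ip_sum_smul {ι : Type*} [Fintype ι] (p : Ω → ℝ) (α : ι → ℝ) (f : ι → Ω → ℝ) :
    ip p (∑ i, α i • f i) = ∑ i, α i * ip p (f i) := by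
  change p ⬝ᵥ (∑ i, α i • f i) = ∑ i, α i * (p ⬝ᵥ f i)
  simp [dotProduct_sum, dotProduct_smul]

lemma LinearMap.apply_eq_ip [DecidableEq Ω] (φ : (Ω → ℝ) →ₗ[ℝ] ℝ) (g : Ω → ℝ) :
    φ g = ip (fun x => φ (Pi.single x 1)) g := by
  conv_lhs => rw [← Finset.univ_sum_single g]
  refine (map_sum φ _ _).trans (Finset.sum_congr rfl fun x _ => ?_)
  rw [mul_comm, ← smul_eq_mul, ← map_smul, ← Pi.single_smul', smul_eq_mul, mul_one]

end Gambles

theorem stmt2_general {Ω : Type*} [Fintype Ω] {n : ℕ} (f : Fin n → Ω → ℝ) :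
    {g : Ω → ℝ | ∀ p : Ω → ℝ, (∀ i, 0 ≤ ip p (f i)) → 0 ≤ ip p g} =
      {g : Ω → ℝ | ∃ α : Fin n → ℝ, (∀ i, 0 ≤ α i) ∧ g = ∑ i, α i • f i} := by
  ext g
  simp only [mem_ofPred_eq, ← mem_hull_range_iff]
  refine ⟨fun hg => ?_, fun hg p hp => ?_⟩
  · classical
    by_contra hgK
    obtain ⟨φ, hφ, hφg⟩ := exists_nonneg_dual_of_notMem_hull_range f hgK
    have hφ_ip := LinearMap.apply_eq_ip φ.toLinearMap
    simp only [ContinuousLinearMap.coe_coe] at hφ_ip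
    exact hφg.not_ge (hφ_ip g ▸ hg _ fun i => hφ_ip (f i) ▸ hφ i)
  · obtain ⟨α, hα, rfl⟩ := mem_hull_range_iff.1 hg
    rw [ip_sum_smul]
    exact Finset.sum_nonneg fun i _ => mul_nonneg (hα i) (hp i)

/-- the cone of desirable gambles
`D = {g : ⟨p, g⟩ ≥ 0 for all p with ⟨p, f i⟩ ≥ 0 ∀ i}` equals the positive hull of the
gambles `f 1, …, f n`. -/
theorem stmt2 {Ω : Type*} [Fintype Ω] [Nonempty Ω] {n : ℕ} (f : Fin n → Ω → ℝ) :
    {g : Ω → ℝ | ∀ p : Ω → ℝ, (∀ i, 0 ≤ ip p (f i)) → 0 ≤ ip p g} =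
      {g : Ω → ℝ | ∃ α : Fin n → ℝ, (∀ i, 0 ≤ α i) ∧ g = ∑ i, α i • f i} :=
  stmt2_general f
end

section
/- Let f_1, …, f_n be gambles on a finite nonempty set Ω such that every nonzero p : Ω → ℝ with ⟨p, f_i⟩ ≥ 0 for all i satisfies ⟨p, 1_Ω⟩ > 0, and let M = {p : Ω → ℝ : ⟨p, f_i⟩ ≥ 0 for all i, ⟨p, 1_Ω⟩ = 1} be nonempty. Let E ∈ M and let h be a gamble such that ⟨E, h⟩ = min_{p∈M} ⟨p, h⟩, and set I = {i : ⟨E, f_i⟩ = 0}. Then there exist α_i ≥ 0 for i ∈ I and β ∈ ℝ such that h = Σ_{i∈I} α_i f_i + β·1_Ω. -/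
open scoped BigOperators

def oneG (Ω : Type*) : Ω → ℝ := fun _ => 1

/-!
If `⟨y, 1_Ω⟩ = 0` and `⟨y, f i⟩ ≥ 0` for every constraint `i` active at `E`, then `E + t • y ∈ M`
for all small `t > 0`, so minimality of `E` gives `⟨y, h⟩ ≥ 0`. Farkas' lemma for the generators
`f i` (`i` active) and `±1_Ω` then writes `h` as the required combination.

Farkas' lemma is proved by induction on the generators: if the last generator `u` cannot be
dropped, some `p` with `⟨p, u⟩ < 0` is nonnegative on the others and negative on `h`, and the
induction hypothesis applies to everything projected onto `p⊥` along `u`.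
-/

open Filter Topology Finset

theorem exists_nonneg_sum_insert_eq {𝕜 M ι : Type*} [Semiring 𝕜] [Preorder 𝕜] [AddCommMonoid M]
    [Module 𝕜 M] [DecidableEq ι] {a : ι} {s : Finset ι} (ha : a ∉ s) (v : ι → M) {μ : 𝕜}
    (hμ : 0 ≤ μ) {c : ι → 𝕜} (hc : ∀ i, 0 ≤ c i) :
    ∃ c' : ι → 𝕜, (∀ i, 0 ≤ c' i) ∧
      μ • v a + ∑ i ∈ s, c i • v i = ∑ i ∈ insert a s, c' i • v i := by
  refine ⟨Function.update c a μ, fun i => ?_, ?_⟩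
  · rcases eq_or_ne i a with rfl | hi
    · simpa using hμ
    · simp [hi, hc i]
  · rw [sum_insert ha, Function.update_self]
    congr 1
    exact sum_congr rfl fun i hi => by rw [Function.update_of_ne (ne_of_mem_of_not_mem hi ha)]

section Farkas

variable {𝕜 Ω ι : Type*} [Field 𝕜] [Fintype Ω]

noncomputable def projKerAlong (p u : Ω → 𝕜) : (Ω → 𝕜) →ₗ[𝕜] (Ω → 𝕜) :=
  LinearMap.id - LinearMap.smulRight ((p ⬝ᵥ u)⁻¹ • dotProductBilin 𝕜 𝕜 p) u

theorem projKerAlong_apply (p u x : Ω → 𝕜) :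
    projKerAlong p u x = x - (p ⬝ᵥ x / p ⬝ᵥ u) • u := by
  simp [projKerAlong, div_eq_inv_mul]

theorem projKerAlong_self {p u : Ω → 𝕜} (hpu : p ⬝ᵥ u ≠ 0) : projKerAlong p u u = 0 := by
  rw [projKerAlong_apply, div_self hpu, one_smul, sub_self]

theorem eq_smul_of_projKerAlong_eq_zero {p u w : Ω → 𝕜} (hw : projKerAlong p u w = 0) :
    w = (p ⬝ᵥ w / p ⬝ᵥ u) • u := by
  rwa [projKerAlong_apply, sub_eq_zero] at hw

theorem dotProduct_projKerAlong (p u y x : Ω → 𝕜) :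
    y ⬝ᵥ projKerAlong p u x = projKerAlong u p y ⬝ᵥ x := by
  simp only [projKerAlong_apply, dotProduct_sub, sub_dotProduct, dotProduct_smul, smul_dotProduct,
    smul_eq_mul, dotProduct_comm y u, dotProduct_comm u p]
  ring

variable [LinearOrder 𝕜] [IsStrictOrderedRing 𝕜]

theorem farkas (v : ι → Ω → 𝕜) (s : Finset ι) (h : Ω → 𝕜)
    (hyp : ∀ y, (∀ i ∈ s, 0 ≤ y ⬝ᵥ v i) → 0 ≤ y ⬝ᵥ h) :
    ∃ c : ι → 𝕜, (∀ i, 0 ≤ c i) ∧ h = ∑ i ∈ s, c i • v i := by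
  classical
  induction s using Finset.induction_on generalizing v h with
  | empty =>
    have hh : h ⬝ᵥ h ≤ 0 := by simpa using hyp (-h) (by simp)
    have hh0 : h = 0 := dotProduct_self_eq_zero.1 <|
      hh.antisymm (Finset.sum_nonneg fun i _ => mul_self_nonneg (h i))
    exact ⟨0, fun _ => le_rfl, by simp [hh0]⟩
  | insert a s ha ih =>
    suffices ∃ μ : 𝕜, 0 ≤ μ ∧ ∃ c : ι → 𝕜, (∀ i, 0 ≤ c i) ∧ h = μ • v a + ∑ i ∈ s, c i • v i by
      obtain ⟨μ, hμ, c, hc, rfl⟩ := this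
      exact exists_nonneg_sum_insert_eq ha v hμ hc
    by_cases hs : ∀ y, (∀ i ∈ s, 0 ≤ y ⬝ᵥ v i) → 0 ≤ y ⬝ᵥ h
    · obtain ⟨c, hc, rfl⟩ := ih v h hs
      exact ⟨0, le_rfl, c, hc, by simp⟩
    push Not at hs
    obtain ⟨p, hp, hph⟩ := hs
    have hpa : p ⬝ᵥ v a < 0 := by
      by_contra! hpa
      exact hph.not_ge (hyp p ((forall_mem_insert _ _ _).2 ⟨hpa, hp⟩))
    set P := projKerAlong p (v a)
    obtain ⟨c, hc, hPh⟩ := ih (fun i => P (v i)) (P h) fun y hy => by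
      rw [dotProduct_projKerAlong]
      refine hyp _ ((forall_mem_insert _ _ _).2 ⟨?_, fun i hi => ?_⟩)
      · rw [← dotProduct_projKerAlong, projKerAlong_self hpa.ne, dotProduct_zero]
      · rw [← dotProduct_projKerAlong]; exact hy i hi
    set w := h - ∑ i ∈ s, c i • v i
    have hPw : P w = 0 := by simp [w, hPh]
    have hpw : p ⬝ᵥ w < 0 := by
      have : 0 ≤ ∑ i ∈ s, c i * (p ⬝ᵥ v i) := sum_nonneg fun i hi => mul_nonneg (hc i) (hp i hi)
      simp only [w, dotProduct_sub, dotProduct_sum, dotProduct_smul, smul_eq_mul]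
      linarith
    refine ⟨p ⬝ᵥ w / p ⬝ᵥ v a, div_nonneg_of_nonpos hpw.le hpa.le, c, hc, ?_⟩
    rw [← eq_smul_of_projKerAlong_eq_zero hPw, sub_add_cancel]

theorem farkas_add_smul [Fintype ι] (v : ι → Ω → 𝕜) (g h : Ω → 𝕜)
    (hyp : ∀ y, y ⬝ᵥ g = 0 → (∀ i, 0 ≤ y ⬝ᵥ v i) → 0 ≤ y ⬝ᵥ h) :
    ∃ (c : ι → 𝕜) (β : 𝕜), (∀ i, 0 ≤ c i) ∧ h = ∑ i, c i • v i + β • g := by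
  obtain ⟨c, hc, rfl⟩ := farkas (Sum.elim v ![g, -g]) univ h fun y hy => by
    refine hyp y ?_ fun i => by simpa using hy (.inl i) (mem_univ _)
    have := hy (.inr 0) (mem_univ _)
    have := hy (.inr 1) (mem_univ _)
    simp_all only [Sum.elim_inr, Matrix.cons_val_zero, Matrix.cons_val_one, dotProduct_neg]
    linarith
  refine ⟨c ∘ .inl, c (.inr 0) - c (.inr 1), fun i => hc _, ?_⟩
  simp only [Fintype.sum_sum_type, Fin.sum_univ_two, Sum.elim_inl, Sum.elim_inr, Function.comp_apply,
    Matrix.cons_val_zero, Matrix.cons_val_one, smul_neg]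
  module

end Farkas

theorem eventually_nonneg_add_mul {a b : ℝ} (ha : 0 ≤ a) (hb : a = 0 → 0 ≤ b) :
    ∀ᶠ t in 𝓝[>] 0, 0 ≤ a + t * b := by
  rcases ha.eq_or_lt with rfl | ha
  · filter_upwards [self_mem_nhdsWithin] with t ht
    simpa using mul_nonneg (le_of_lt ht) (hb rfl)
  · have hcont : Tendsto (fun t : ℝ => a + t * b) (𝓝 0) (𝓝 a) :=
      (by fun_prop : Continuous fun t : ℝ => a + t * b).tendsto' 0 a (by simp)
    exact nhdsWithin_le_nhds ((hcont.eventually (lt_mem_nhds ha)).mono fun _ => le_of_lt)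

theorem exists_active_combination_of_isMinOn {ι Ω : Type*} [Fintype ι] [Fintype Ω]
    {f : ι → Ω → ℝ} {g h E : Ω → ℝ}
    (hE : E ∈ {p : Ω → ℝ | (∀ i, 0 ≤ p ⬝ᵥ f i) ∧ p ⬝ᵥ g = 1})
    (hmin : IsMinOn (· ⬝ᵥ h) {p | (∀ i, 0 ≤ p ⬝ᵥ f i) ∧ p ⬝ᵥ g = 1} E) :
    ∃ (α : ι → ℝ) (β : ℝ), (∀ i, 0 ≤ α i) ∧ (∀ i, E ⬝ᵥ f i ≠ 0 → α i = 0) ∧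
      h = ∑ i, α i • f i + β • g := by
  classical
  obtain ⟨hEf, hEg⟩ := hE
  obtain ⟨c, β, hc, hh⟩ := farkas_add_smul (fun i => if E ⬝ᵥ f i = 0 then f i else 0) g h
    fun y hyg hy => by
      have hfeas : ∀ᶠ t in 𝓝[>] (0 : ℝ), ∀ i, 0 ≤ (E + t • y) ⬝ᵥ f i := by
        refine eventually_all.2 fun i => ?_
        simp only [add_dotProduct, smul_dotProduct, smul_eq_mul]
        refine eventually_nonneg_add_mul (hEf i) fun hi => ?_
        simpa [hi] using hy i
      obtain ⟨t, ht, ht0⟩ := (hfeas.and self_mem_nhdsWithin).exists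
      have hle : E ⬝ᵥ h ≤ (E + t • y) ⬝ᵥ h := hmin ⟨ht, by simp [add_dotProduct, hEg, hyg]⟩
      rw [add_dotProduct, smul_dotProduct, smul_eq_mul, le_add_iff_nonneg_right] at hle
      exact (mul_nonneg_iff_of_pos_left ht0).1 hle
  refine ⟨fun i => if E ⬝ᵥ f i = 0 then c i else 0, β, fun i => ?_, fun i hi => by simp [hi], ?_⟩
  · dsimp only
    split_ifs <;> simp [hc i]
  · rw [hh]
    congr 1
    refine sum_congr rfl fun i _ => ?_
    split_ifs with hi <;> simp [hi]

theorem ip_eq_dotProduct {Ω : Type*} [Fintype Ω] (f g : Ω → ℝ) : ip f g = f ⬝ᵥ g := rfl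

theorem stmt3_general {Ω : Type*} [Fintype Ω] {n : ℕ} (f : Fin n → Ω → ℝ)
    (M : Set (Ω → ℝ))
    (hM : M = {p | (∀ i, 0 ≤ ip p (f i)) ∧ ip p (oneG Ω) = 1})
    (E : Ω → ℝ) (hE : E ∈ M)
    (h : Ω → ℝ) (hmin : ∀ p ∈ M, ip E h ≤ ip p h)
    (I : Set (Fin n)) (hI : I = {i | ip E (f i) = 0}) :
    ∃ (α : Fin n → ℝ) (β : ℝ), (∀ i, 0 ≤ α i) ∧ (∀ i, i ∉ I → α i = 0) ∧
      h = (∑ i, α i • f i) + β • oneG Ω := by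
  subst hM hI
  simp only [ip_eq_dotProduct] at hE hmin ⊢
  exact exists_active_combination_of_isMinOn hE (isMinOn_iff.2 hmin)

/-- if `E ∈ M` and `⟨E, h⟩ = min_{p∈M} ⟨p, h⟩`, then `h` is a nonnegative
combination of the constraints active at `E` plus a multiple of the constant gamble. -/
theorem stmt3 {Ω : Type*} [Fintype Ω] [Nonempty Ω] {n : ℕ} (f : Fin n → Ω → ℝ)
    (hpos : ∀ p : Ω → ℝ, p ≠ 0 → (∀ i, 0 ≤ ip p (f i)) → 0 < ip p (oneG Ω))
    (M : Set (Ω → ℝ))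
    (hM : M = {p | (∀ i, 0 ≤ ip p (f i)) ∧ ip p (oneG Ω) = 1})
    (hMne : M.Nonempty)
    (E : Ω → ℝ) (hE : E ∈ M)
    (h : Ω → ℝ) (hmin : ∀ p ∈ M, ip E h ≤ ip p h)
    (I : Set (Fin n)) (hI : I = {i | ip E (f i) = 0}) :
    ∃ (α : Fin n → ℝ) (β : ℝ), (∀ i, 0 ≤ α i) ∧ (∀ i, i ∉ I → α i = 0) ∧
      h = (∑ i, α i • f i) + β • oneG Ω :=
  stmt3_general f M hM E hE h hmin I hI
end

section
/- Let f_1, …, f_n be gambles on a finite nonempty set Ω such that every nonzero p : Ω → ℝ with ⟨p, f_i⟩ ≥ 0 for all i satisfies ⟨p, 1_Ω⟩ > 0, let M = {p : Ω → ℝ : ⟨p, f_i⟩ ≥ 0 for all i, ⟨p, 1_Ω⟩ = 1} be nonempty, let E ∈ M, let h be a gamble with ⟨E, h⟩ = min_{p∈M} ⟨p, h⟩, and set I = {i : ⟨E, f_i⟩ = 0}. For each i let f'_i = f_i − (⟨f_i, 1_Ω⟩/|Ω|)·1_Ω, so that ⟨f'_i, 1_Ω⟩ = 0. Then there exist α'_i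 ≥ 0 for i ∈ I and β' ∈ ℝ such that h = Σ_{i∈I} α'_i f'_i + β'·1_Ω, and moreover ‖Σ_{i∈I} α'_i f'_i‖ ≤ ‖Σ_{i∈I} α'_i f'_i + β·1_Ω‖ for every β ∈ ℝ. -/
open scoped BigOperators

/-- Euclidean norm of a gamble. -/
noncomputable def nrm {Ω : Type*} [Fintype Ω] (f : Ω → ℝ) : ℝ := Real.sqrt (ip f f)

/-!
At a minimiser `E` of `⟨·, h⟩` over `M`, a short step from `E` in any direction `d` with
`⟨d, 1_Ω⟩ = 0` that does not decrease the active constraints stays in `M`, so `⟨d, h⟩ ≥ 0`.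
Projecting orthogonally onto `1_Ωᗮ`, this says that the centred part of `h` pairs nonnegatively
with everything that pairs nonnegatively with the centred active `f'_i`; by Farkas' lemma (proved
by eliminating one generator at a time) it is a nonnegative combination of them. That combination
is orthogonal to `1_Ω`, so Pythagoras gives the norm inequality.
-/

open RealInnerProductSpace Filter Topology

section InnerProductSpace

variable {E : Type*} [NormedAddCommGroup E] [InnerProductSpace ℝ E]

/-- The projection onto `qᗮ` along `v` (when `⟪q, v⟫ ≠ 0`); `projAlong u u` is the orthogonal
projection onto `uᗮ`. -/
noncomputable def projAlong (q v : E) : E →ₗ[ℝ] E :=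
  LinearMap.id - (⟪q, v⟫⁻¹ • innerₗ E q).smulRight v

theorem projAlong_apply (q v x : E) : projAlong q v x = x - (⟪q, x⟫ / ⟪q, v⟫) • v := by
  simp [projAlong, div_eq_inv_mul]

theorem inner_projAlong_left (q v p x : E) :
    ⟪projAlong v q p, x⟫ = ⟪p, projAlong q v x⟫ := by
  simp only [projAlong_apply, inner_sub_left, inner_sub_right, inner_smul_left,
    inner_smul_right, real_inner_comm, RCLike.conj_to_real]
  ring

theorem inner_projAlong_eq_zero {q v : E} (hqv : ⟪q, v⟫ ≠ 0) (x : E) :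
    ⟪q, projAlong q v x⟫ = 0 := by
  rw [projAlong_apply, inner_sub_right, inner_smul_right, div_mul_cancel₀ _ hqv, sub_self]

theorem projAlong_self {q v : E} (hqv : ⟪q, v⟫ ≠ 0) : projAlong q v v = 0 := by
  rw [projAlong_apply, div_self hqv, one_smul, sub_self]

theorem inner_projAlong_self_self (u x : E) : ⟪u, projAlong u u x⟫ = 0 := by
  rcases eq_or_ne u 0 with rfl | hu
  · simp
  · exact inner_projAlong_eq_zero (inner_self_ne_zero.2 hu) x

theorem norm_le_norm_add_smul_of_inner_eq_zero {x u : E} (hxu : ⟪x, u⟫ = 0) (β : ℝ) :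
    ‖x‖ ≤ ‖x + β • u‖ := by
  rw [mul_self_le_mul_self_iff (norm_nonneg _) (norm_nonneg _),
    norm_add_sq_eq_norm_sq_add_norm_sq_real (by rw [inner_smul_right, hxu, mul_zero])]
  exact le_add_of_nonneg_right (mul_self_nonneg _)

theorem exists_nonneg_sum_smul_eq_of_inner_nonneg {ι : Type*} [DecidableEq ι] (g : ι → E)
    (s : Finset ι) {h : E} (hyp : ∀ p : E, (∀ i ∈ s, 0 ≤ ⟪p, g i⟫) → 0 ≤ ⟪p, h⟫) :
    ∃ c : ι → ℝ, (∀ i, 0 ≤ c i) ∧ (∀ i ∉ s, c i = 0) ∧ h = ∑ i ∈ s, c i • g i := by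
  induction s using Finset.induction_on generalizing g h with
  | empty =>
    have : h = 0 := real_inner_self_nonpos.1 <| by simpa [inner_neg_left] using hyp (-h) (by simp)
    exact ⟨0, fun _ ↦ le_rfl, fun _ _ ↦ rfl, by simp [this]⟩
  | insert a s ha ih =>
    by_cases hs : ∀ p : E, (∀ i ∈ s, 0 ≤ ⟪p, g i⟫) → 0 ≤ ⟪p, h⟫
    · obtain ⟨c, hc, hcs, rfl⟩ := ih g hs
      refine ⟨c, hc, fun i hi ↦ hcs i (by simp_all), ?_⟩
      rw [Finset.sum_insert ha, hcs a ha, zero_smul, zero_add]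
    push Not at hs
    obtain ⟨p₀, hp₀s, hp₀h⟩ := hs
    have hp₀a : ⟪p₀, g a⟫ < 0 := by
      by_contra! hp₀a
      exact hp₀h.not_ge <| hyp p₀ <| Finset.forall_mem_insert _ _ _ |>.2 ⟨hp₀a, hp₀s⟩
    -- Eliminate `g a` by projecting everything onto `p₀ᗮ` along `g a`.
    set π := projAlong p₀ (g a)
    obtain ⟨c, hc, hcs, hπh⟩ := ih (g := fun i ↦ π (g i)) (h := π h) fun p hp ↦ by
      have hpa : ⟪projAlong (g a) p₀ p, g a⟫ = 0 := by
        rw [inner_projAlong_left, projAlong_self hp₀a.ne, inner_zero_right]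
      simpa only [inner_projAlong_left] using hyp (projAlong (g a) p₀ p) <|
        Finset.forall_mem_insert _ _ _ |>.2 ⟨hpa.ge, fun i hi ↦ by
          simpa only [inner_projAlong_left] using hp i hi⟩
    set μ := (⟪p₀, h⟫ - ∑ i ∈ s, c i * ⟪p₀, g i⟫) / ⟪p₀, g a⟫
    have hμ : 0 ≤ μ := div_nonneg_of_nonpos (by
      linarith [Finset.sum_nonneg fun i hi ↦ mul_nonneg (hc i) (hp₀s i hi)]) hp₀a.le
    refine ⟨Function.update c a μ, ?_, ?_, ?_⟩
    · intro i
      rcases eq_or_ne i a with rfl | hia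
      · simpa using hμ
      · simpa [hia] using hc i
    · intro i hi
      rw [Finset.mem_insert, not_or] at hi
      rw [Function.update_of_ne hi.1, hcs i hi.2]
    · rw [Finset.sum_insert ha, Function.update_self,
        Finset.sum_congr rfl fun i hi ↦ by rw [Function.update_of_ne (ne_of_mem_of_not_mem hi ha)]]
      simp only [π, projAlong_apply, smul_sub, smul_smul, Finset.sum_sub_distrib,
        ← Finset.sum_smul] at hπh
      rw [sub_eq_iff_eq_add] at hπh
      have hμ' : μ = ⟪p₀, h⟫ / ⟪p₀, g a⟫ - ∑ i ∈ s, c i * (⟪p₀, g i⟫ / ⟪p₀, g a⟫) := by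
        simp only [μ, sub_div, Finset.sum_div, mul_div_assoc]
      rw [hπh, hμ', sub_smul]
      abel

section Minimizer

variable {ι : Type*} [Fintype ι] {f : ι → E} {u e h : E}

theorem inner_nonneg_of_isMin_of_active (he : ∀ i, 0 ≤ ⟪e, f i⟫) (heu : ⟪e, u⟫ = 1)
    (hmin : ∀ p, (∀ i, 0 ≤ ⟪p, f i⟫) → ⟪p, u⟫ = 1 → ⟪e, h⟫ ≤ ⟪p, h⟫) {d : E}
    (hdu : ⟪d, u⟫ = 0) (hd : ∀ i, ⟪e, f i⟫ = 0 → 0 ≤ ⟪d, f i⟫) : 0 ≤ ⟪d, h⟫ := by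
  -- `e + t • d` stays feasible for small `t > 0`: the inactive constraints by continuity.
  have hfeas : ∀ᶠ t in 𝓝[>] (0 : ℝ), 0 < t ∧ ∀ i, 0 ≤ ⟪e + t • d, f i⟫ := by
    refine eventually_mem_nhdsWithin.and (eventually_all.2 fun i ↦ ?_)
    simp only [inner_add_left, inner_smul_left, RCLike.conj_to_real]
    rcases (he i).eq_or_lt with hi | hi
    · filter_upwards [self_mem_nhdsWithin] with t ht
      rw [← hi, zero_add]
      exact mul_nonneg (le_of_lt ht) (hd i hi.symm)
    · have : Tendsto (fun t : ℝ ↦ ⟪e, f i⟫ + t * ⟪d, f i⟫) (𝓝[>] 0) (𝓝 ⟪e, f i⟫) := by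
        have hc : Continuous fun t : ℝ ↦ ⟪e, f i⟫ + t * ⟪d, f i⟫ := by fun_prop
        simpa using (hc.tendsto 0).mono_left nhdsWithin_le_nhds
      exact (this.eventually (lt_mem_nhds hi)).mono fun _ ↦ le_of_lt
  obtain ⟨t, ht, hft⟩ := hfeas.exists
  have := hmin (e + t • d) hft (by simp [inner_add_left, inner_smul_left, heu, hdu])
  rw [inner_add_left, inner_smul_left, RCLike.conj_to_real] at this
  exact nonneg_of_mul_nonneg_right (by linarith) ht

theorem exists_centered_decomposition_of_isMin (he : ∀ i, 0 ≤ ⟪e, f i⟫) (heu : ⟪e, u⟫ = 1)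
    (hmin : ∀ p, (∀ i, 0 ≤ ⟪p, f i⟫) → ⟪p, u⟫ = 1 → ⟪e, h⟫ ≤ ⟪p, h⟫) :
    ∃ (α : ι → ℝ) (β' : ℝ), (∀ i, 0 ≤ α i) ∧ (∀ i, ⟪e, f i⟫ ≠ 0 → α i = 0) ∧
      h = ∑ i, α i • projAlong u u (f i) + β' • u ∧
      ∀ β : ℝ, ‖∑ i, α i • projAlong u u (f i)‖ ≤ ‖∑ i, α i • projAlong u u (f i) + β • u‖ := by
  classical
  set s := Finset.univ.filter fun i ↦ ⟪e, f i⟫ = 0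
  obtain ⟨α, hα, hαs, hh⟩ := exists_nonneg_sum_smul_eq_of_inner_nonneg
    (fun i ↦ projAlong u u (f i)) s (h := projAlong u u h) fun p hp ↦ by
      rw [← inner_projAlong_left]
      refine inner_nonneg_of_isMin_of_active he heu hmin ?_ fun i hi ↦ ?_
      · rw [real_inner_comm, inner_projAlong_self_self]
      · rw [inner_projAlong_left]
        exact hp i (by simpa [s] using hi)
  rw [Finset.sum_subset (Finset.subset_univ s) fun i _ hi ↦ by rw [hαs i hi, zero_smul]] at hh
  refine ⟨α, ⟪u, h⟫ / ⟪u, u⟫, hα, fun i hi ↦ hαs i (by simpa [s] using hi), ?_, fun β ↦ ?_⟩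
  · rw [← hh, projAlong_apply, sub_add_cancel]
  · refine norm_le_norm_add_smul_of_inner_eq_zero ?_ β
    simp only [← map_smul, ← map_sum]
    rw [real_inner_comm, inner_projAlong_self_self]

end Minimizer

end InnerProductSpace

section Gambles

variable {Ω : Type*} [Fintype Ω]

theorem ip_eq_inner (f g : Ω → ℝ) : ip f g = ⟪WithLp.toLp 2 f, WithLp.toLp 2 g⟫ := by
  simp [ip, PiLp.inner_apply, mul_comm]

theorem nrm_eq_norm (f : Ω → ℝ) : nrm f = ‖WithLp.toLp 2 f‖ := by
  rw [nrm, ip_eq_inner, real_inner_self_eq_norm_sq, Real.sqrt_sq (norm_nonneg _)]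

theorem ip_oneG_oneG : ip (oneG Ω) (oneG Ω) = Fintype.card Ω := by
  simp [ip, oneG]

end Gambles

theorem stmt4_general {Ω : Type*} [Fintype Ω] {n : ℕ} (f : Fin n → Ω → ℝ)
    (M : Set (Ω → ℝ))
    (hM : M = {p | (∀ i, 0 ≤ ip p (f i)) ∧ ip p (oneG Ω) = 1})
    (E : Ω → ℝ) (hE : E ∈ M)
    (h : Ω → ℝ) (hmin : ∀ p ∈ M, ip E h ≤ ip p h)
    (I : Set (Fin n)) (hI : I = {i | ip E (f i) = 0})
    (f' : Fin n → Ω → ℝ)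
    (hf' : ∀ i, f' i = f i - (ip (f i) (oneG Ω) / (Fintype.card Ω : ℝ)) • oneG Ω) :
    ∃ (α' : Fin n → ℝ) (β' : ℝ), (∀ i, 0 ≤ α' i) ∧ (∀ i, i ∉ I → α' i = 0) ∧
      h = (∑ i, α' i • f' i) + β' • oneG Ω ∧
      ∀ β : ℝ, nrm (∑ i, α' i • f' i) ≤ nrm ((∑ i, α' i • f' i) + β • oneG Ω) := by
  set u := WithLp.toLp 2 (oneG Ω)
  have hf'u : ∀ i, WithLp.toLp 2 (f' i) = projAlong u u (WithLp.toLp 2 (f i)) := fun i ↦ by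
    rw [hf', projAlong_apply, ← ip_oneG_oneG, ip_eq_inner, real_inner_comm, ← ip_eq_inner]
    rfl
  subst hM hI
  obtain ⟨α, β', hα, hαI, hh, hnorm⟩ := exists_centered_decomposition_of_isMin
    (f := fun i ↦ WithLp.toLp 2 (f i)) (u := u) (e := WithLp.toLp 2 E) (h := WithLp.toLp 2 h)
    (by simpa [ip_eq_inner] using hE.1) (by simpa [ip_eq_inner] using hE.2)
    fun p hp hpu ↦ by simpa [ip_eq_inner] using hmin p.ofLp (by simpa [ip_eq_inner] using ⟨hp, hpu⟩)
  refine ⟨α, β', hα, fun i hi ↦ hαI i (by simpa [ip_eq_inner] using hi), ?_, fun β ↦ ?_⟩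
  · apply WithLp.toLp_injective 2
    simpa [WithLp.toLp_sum, hf'u] using hh
  · simpa [nrm_eq_norm, WithLp.toLp_sum, hf'u] using hnorm β

/-- decomposition of `h` in terms of the centered active constraints
`f' i = f i − (⟨f i, 1_Ω⟩/|Ω|)·1_Ω`, together with the minimal-norm property. -/
theorem stmt4 {Ω : Type*} [Fintype Ω] [Nonempty Ω] {n : ℕ} (f : Fin n → Ω → ℝ)
    (hpos : ∀ p : Ω → ℝ, p ≠ 0 → (∀ i, 0 ≤ ip p (f i)) → 0 < ip p (oneG Ω))
    (M : Set (Ω → ℝ))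
    (hM : M = {p | (∀ i, 0 ≤ ip p (f i)) ∧ ip p (oneG Ω) = 1})
    (hMne : M.Nonempty)
    (E : Ω → ℝ) (hE : E ∈ M)
    (h : Ω → ℝ) (hmin : ∀ p ∈ M, ip E h ≤ ip p h)
    (I : Set (Fin n)) (hI : I = {i | ip E (f i) = 0})
    (f' : Fin n → Ω → ℝ)
    (hf' : ∀ i, f' i = f i - (ip (f i) (oneG Ω) / (Fintype.card Ω : ℝ)) • oneG Ω) :
    ∃ (α' : Fin n → ℝ) (β' : ℝ), (∀ i, 0 ≤ α' i) ∧ (∀ i, i ∉ I → α' i = 0) ∧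
      h = (∑ i, α' i • f' i) + β' • oneG Ω ∧
      ∀ β : ℝ, nrm (∑ i, α' i • f' i) ≤ nrm ((∑ i, α' i • f' i) + β • oneG Ω) :=
  stmt4_general f M hM E hE h hmin I hI f' hf'
end

section
/- Let Ω, K, b, M, E̲ and the faces M_f be as in the setting of a coherent assessment, and let P̲ be an extension of (K, b) with credal set M'. Then for every gamble h and every f ∈ K, P̲(h) ≤ max_{p ∈ M_f} ⟨p, h⟩. -/
/-!
The credal set `M'` of an extension lies inside `M`, since `P̲ = b` on `K` makes every
`p ∈ M'` satisfy the assessment. A minimiser `q` of `⟨·, f⟩` over `M'` therefore lies in `M`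
with `⟨q, f⟩ = P̲(f) = b(f) = E̲(f)`, i.e. in the face `M_f`, and `P̲(h) ≤ ⟨q, h⟩`.
-/

open scoped BigOperators

/-- A probability mass vector on `Ω`. -/
def IsPMV {Ω : Type*} [Fintype Ω] (p : Ω → ℝ) : Prop :=
  (∀ x, 0 ≤ p x) ∧ ∑ x, p x = 1

section

variable {Ω : Type*} [Fintype Ω]

lemma le_ip_of_isLeast {S : Set (Ω → ℝ)} {g : Ω → ℝ} {c : ℝ}
    (hc : IsLeast {r : ℝ | ∃ p ∈ S, r = ip p g} c) {p : Ω → ℝ} (hp : p ∈ S) :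
    c ≤ ip p g :=
  hc.2 ⟨p, hp, rfl⟩

lemma subset_credalSet_of_lowerEnvelope_eq {K : Finset (Ω → ℝ)} {b : (Ω → ℝ) → ℝ}
    {M' : Set (Ω → ℝ)} (hpmv' : ∀ p ∈ M', IsPMV p) {lP : (Ω → ℝ) → ℝ}
    (hlP : ∀ h : Ω → ℝ, IsLeast {r : ℝ | ∃ p ∈ M', r = ip p h} (lP h))
    (hb' : ∀ g ∈ K, lP g = b g) :
    M' ⊆ {p | IsPMV p ∧ ∀ g ∈ K, b g ≤ ip p g} := fun p hp =>
  ⟨hpmv' p hp, fun g hg => hb' g hg ▸ le_ip_of_isLeast (hlP g) hp⟩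

end

theorem stmt11_general {Ω : Type*} [Fintype Ω]
    (K : Finset (Ω → ℝ)) (b : (Ω → ℝ) → ℝ)
    (M : Set (Ω → ℝ)) (hM : M = {p | IsPMV p ∧ ∀ g ∈ K, b g ≤ ip p g})
    (lE : (Ω → ℝ) → ℝ)
    (hcoh : ∀ g ∈ K, lE g = b g)
    (M' : Set (Ω → ℝ)) (hpmv' : ∀ p ∈ M', IsPMV p)
    (lP : (Ω → ℝ) → ℝ)
    (hlP : ∀ h : Ω → ℝ, IsLeast {r : ℝ | ∃ p ∈ M', r = ip p h} (lP h))
    (hb' : ∀ g ∈ K, lP g = b g) :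
    ∀ h : Ω → ℝ, ∀ f ∈ K, ∃ p ∈ {q ∈ M | ip q f = lE f}, lP h ≤ ip p h := by
  intro h f hf
  obtain ⟨q, hq, hqf⟩ := (hlP f).1
  have hqM : q ∈ M := hM ▸ subset_credalSet_of_lowerEnvelope_eq hpmv' hlP hb' hq
  have hq_face : ip q f = lE f := by rw [← hqf, hb' f hf, hcoh f hf]
  exact ⟨q, ⟨hqM, hq_face⟩, le_ip_of_isLeast (hlP h) hq⟩

/-- for any extension `P̲` of a coherent assessment `(K, b)`, any gamble `h`
and any `f ∈ K`, we have `P̲(h) ≤ max_{p ∈ M_f} ⟨p, h⟩`, i.e. `P̲(h)` is dominated by the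
value of `h` at some point of the face `M_f = {p ∈ M : ⟨p, f⟩ = E̲(f)}`. -/
theorem stmt11 {Ω : Type*} [Fintype Ω] [Nonempty Ω]
    (K : Finset (Ω → ℝ)) (b : (Ω → ℝ) → ℝ)
    (M : Set (Ω → ℝ)) (hM : M = {p | IsPMV p ∧ ∀ g ∈ K, b g ≤ ip p g})
    (hMne : M.Nonempty)
    (lE : (Ω → ℝ) → ℝ)
    (hlE : ∀ h : Ω → ℝ, IsLeast {r : ℝ | ∃ p ∈ M, r = ip p h} (lE h))
    (hcoh : ∀ g ∈ K, lE g = b g)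
    (M' : Set (Ω → ℝ)) (hne' : M'.Nonempty) (hcomp' : IsCompact M')
    (hconv' : Convex ℝ M') (hpmv' : ∀ p ∈ M', IsPMV p)
    (lP : (Ω → ℝ) → ℝ)
    (hlP : ∀ h : Ω → ℝ, IsLeast {r : ℝ | ∃ p ∈ M', r = ip p h} (lP h))
    (hb' : ∀ g ∈ K, lP g = b g) :
    ∀ h : Ω → ℝ, ∀ f ∈ K, ∃ p ∈ {q ∈ M | ip q f = lE f}, lP h ≤ ip p h :=
  stmt11_general K b M hM lE hcoh M' hpmv' lP hlP hb'
end

section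
/- Let Ω, K, b, M, E̲ and the faces M_f be as in the setting of a coherent assessment with K nonempty, and let P̲ be an extension of (K, b). Then for every gamble h, P̲(h) ≤ min_{f ∈ K} max_{p ∈ M_f} ⟨p, h⟩. -/
/-!
A minimiser `p ∈ M'` of `⟨·, f⟩` for `f ∈ K` satisfies `⟨p, g⟩ ≥ P̲(g) = b(g)` for every `g ∈ K`,
so `p ∈ M`, and `⟨p, f⟩ = b(f) = E̲(f)`, so `p ∈ M_f`. Hence
`P̲(h) ≤ ⟨p, h⟩ ≤ max_{q ∈ M_f} ⟨q, h⟩` for each `f ∈ K`.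
-/

open scoped BigOperators

section

variable {Ω : Type*} [Fintype Ω]

def credalSet (K : Finset (Ω → ℝ)) (b : (Ω → ℝ) → ℝ) : Set (Ω → ℝ) :=
  {p | IsPMV p ∧ ∀ g ∈ K, b g ≤ ip p g}

theorem IsPMV.le_one {p : Ω → ℝ} (hp : IsPMV p) (x : Ω) : p x ≤ 1 :=
  hp.2 ▸ Finset.single_le_sum (fun i _ => hp.1 i) (Finset.mem_univ x)

theorem IsPMV.ip_le_sum_abs {p : Ω → ℝ} (hp : IsPMV p) (h : Ω → ℝ) :
    ip p h ≤ ∑ x, |h x| :=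
  Finset.sum_le_sum fun x _ =>
    calc p x * h x ≤ p x * |h x| := mul_le_mul_of_nonneg_left (le_abs_self _) (hp.1 x)
      _ ≤ |h x| := mul_le_of_le_one_left (abs_nonneg _) (hp.le_one x)

theorem bddAbove_ip_of_isPMV {S : Set (Ω → ℝ)} (hS : ∀ p ∈ S, IsPMV p) (h : Ω → ℝ) :
    BddAbove {s : ℝ | ∃ p ∈ S, s = ip p h} := by
  refine ⟨∑ x, |h x|, ?_⟩
  rintro _ ⟨p, hp, rfl⟩
  exact (hS p hp).ip_le_sum_abs h

theorem exists_mem_credalSet_ip_eq_of_isLeast {K : Finset (Ω → ℝ)} {b : (Ω → ℝ) → ℝ}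
    {S : Set (Ω → ℝ)} (hpmv : ∀ p ∈ S, IsPMV p) {lP : (Ω → ℝ) → ℝ}
    (hlP : ∀ h : Ω → ℝ, IsLeast {r : ℝ | ∃ p ∈ S, r = ip p h} (lP h))
    (hb : ∀ g ∈ K, lP g = b g) {f : Ω → ℝ} (hf : f ∈ K) :
    ∃ p ∈ S, p ∈ credalSet K b ∧ ip p f = b f := by
  obtain ⟨p, hpS, hpf⟩ := (hlP f).1
  refine ⟨p, hpS, ⟨hpmv p hpS, fun g hg => ?_⟩, by rw [← hpf, hb f hf]⟩
  exact hb g hg ▸ (hlP g).2 ⟨p, hpS, rfl⟩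

end

theorem stmt12_general {Ω : Type*} [Fintype Ω]
    (K : Finset (Ω → ℝ)) (hK : K.Nonempty) (b : (Ω → ℝ) → ℝ)
    (M : Set (Ω → ℝ)) (hM : M = {p | IsPMV p ∧ ∀ g ∈ K, b g ≤ ip p g})
    (lE : (Ω → ℝ) → ℝ)
    (hcoh : ∀ g ∈ K, lE g = b g)
    (M' : Set (Ω → ℝ)) (hpmv' : ∀ p ∈ M', IsPMV p)
    (lP : (Ω → ℝ) → ℝ)
    (hlP : ∀ h : Ω → ℝ, IsLeast {r : ℝ | ∃ p ∈ M', r = ip p h} (lP h))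
    (hb' : ∀ g ∈ K, lP g = b g) :
    ∀ h : Ω → ℝ,
      lP h ≤ sInf {r : ℝ | ∃ f ∈ K,
        r = sSup {s : ℝ | ∃ p ∈ {q ∈ M | ip q f = lE f}, s = ip p h}} := by
  change M = credalSet K b at hM
  subst hM
  intro h
  refine le_csInf ?_ ?_
  · obtain ⟨f, hf⟩ := hK
    exact ⟨_, f, hf, rfl⟩
  rintro _ ⟨f, hfK, rfl⟩
  obtain ⟨p, hpM', hpM, hpf⟩ := exists_mem_credalSet_ip_eq_of_isLeast hpmv' hlP hb' hfK
  have hface : p ∈ {q ∈ credalSet K b | ip q f = lE f} := ⟨hpM, by rw [hcoh f hfK, hpf]⟩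
  calc lP h ≤ ip p h := (hlP h).2 ⟨p, hpM', rfl⟩
    _ ≤ _ := le_csSup (bddAbove_ip_of_isPMV (fun q hq => hq.1.1) h) ⟨p, hface, rfl⟩

/-- for any extension `P̲` of a coherent assessment `(K, b)` and any gamble
`h`, `P̲(h) ≤ min_{f ∈ K} max_{p ∈ M_f} ⟨p, h⟩`. -/
theorem stmt12 {Ω : Type*} [Fintype Ω] [Nonempty Ω]
    (K : Finset (Ω → ℝ)) (hK : K.Nonempty) (b : (Ω → ℝ) → ℝ)
    (M : Set (Ω → ℝ)) (hM : M = {p | IsPMV p ∧ ∀ g ∈ K, b g ≤ ip p g})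
    (hMne : M.Nonempty)
    (lE : (Ω → ℝ) → ℝ)
    (hlE : ∀ h : Ω → ℝ, IsLeast {r : ℝ | ∃ p ∈ M, r = ip p h} (lE h))
    (hcoh : ∀ g ∈ K, lE g = b g)
    (M' : Set (Ω → ℝ)) (hne' : M'.Nonempty) (hcomp' : IsCompact M')
    (hconv' : Convex ℝ M') (hpmv' : ∀ p ∈ M', IsPMV p)
    (lP : (Ω → ℝ) → ℝ)
    (hlP : ∀ h : Ω → ℝ, IsLeast {r : ℝ | ∃ p ∈ M', r = ip p h} (lP h))
    (hb' : ∀ g ∈ K, lP g = b g) :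
    ∀ h : Ω → ℝ,
      lP h ≤ sInf {r : ℝ | ∃ f ∈ K,
        r = sSup {s : ℝ | ∃ p ∈ {q ∈ M | ip q f = lE f}, s = ip p h}} :=
  stmt12_general K hK b M hM lE hcoh M' hpmv' lP hlP hb'
end

section
/- Let Ω, K, b, M, E̲ and the faces M_f be as in the setting of a coherent assessment with K nonempty. Then for every gamble h there exists an extension P̲' of (K, b) (namely the lower envelope of the convex hull of one maximizer of ⟨·, h⟩ on each face M_f, f ∈ K) such that P̲'(h) = min_{f ∈ K} max_{p ∈ M_f} ⟨p, h⟩. -/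
open scoped BigOperators

/-!
Pick, on each face `M_f` (`f ∈ K`), a point `P f` maximizing `⟨·, h⟩`; these faces are nonempty
and compact, so `P f` exists. Since `⟨·, g⟩` is linear, its minimum over the convex hull of the
finitely many points `P f` is attained at one of them. For `g ∈ K` that minimum is `b g`: every
`P f` lies in `M`, so `⟨P f, g⟩ ≥ b g`, and `⟨P g, g⟩ = E̲(g) = b g` by coherence. For `g = h`
the minimum is `min_f ⟨P f, h⟩ = min_f max_{M_f} ⟨·, h⟩`.
-/

section

variable {Ω : Type*} [Fintype Ω]

theorem isLinearMap_ip_left (g : Ω → ℝ) : IsLinearMap ℝ fun p : Ω → ℝ => ip p g where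
  map_add p q := by simp only [ip, Pi.add_apply, add_mul, Finset.sum_add_distrib]
  map_smul c p := by simp only [ip, Pi.smul_apply, smul_eq_mul, Finset.mul_sum, mul_assoc]

theorem continuous_ip_left (g : Ω → ℝ) : Continuous fun p : Ω → ℝ => ip p g :=
  continuous_finsetSum _ fun x _ => (continuous_apply x).mul continuous_const

theorem isCompact_credalSet (K : Set (Ω → ℝ)) (b : (Ω → ℝ) → ℝ) :
    IsCompact {p : Ω → ℝ | IsPMV p ∧ ∀ g ∈ K, b g ≤ ip p g} := by
  have hconstr : IsClosed {p : Ω → ℝ | ∀ g ∈ K, b g ≤ ip p g} := by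
    simp only [Set.ofPred_forall]
    exact isClosed_biInter fun g _ => isClosed_le continuous_const (continuous_ip_left g)
  -- `IsPMV p` unfolds to `p ∈ stdSimplex ℝ Ω`.
  exact (isCompact_stdSimplex ℝ Ω).inter_right hconstr

theorem exists_isGreatest_ip_of_isCompact {s : Set (Ω → ℝ)} (hs : IsCompact s)
    (hne : s.Nonempty) (h : Ω → ℝ) :
    ∃ p ∈ s, IsGreatest {r | ∃ q ∈ s, r = ip q h} (ip p h) := by
  obtain ⟨p, hp, hmax⟩ := hs.exists_isMaxOn hne (continuous_ip_left h).continuousOn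
  exact ⟨p, hp, ⟨p, hp, rfl⟩, by rintro _ ⟨q, hq, rfl⟩; exact hmax hq⟩

theorem isLeast_ip_convexHull {ι : Type*} (K : Finset ι) (hK : K.Nonempty) (P : ι → Ω → ℝ)
    (g : Ω → ℝ) :
    IsLeast {r | ∃ p ∈ convexHull ℝ (P '' K), r = ip p g} (K.inf' hK fun i => ip (P i) g) := by
  constructor
  · obtain ⟨i, hi, hmin⟩ := K.exists_mem_eq_inf' hK fun i => ip (P i) g
    exact ⟨P i, subset_convexHull ℝ _ ⟨i, hi, rfl⟩, hmin⟩
  · rintro _ ⟨p, hp, rfl⟩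
    have hconc : ConcaveOn ℝ Set.univ fun p : Ω → ℝ => ip p g :=
      (IsLinearMap.mk' _ (isLinearMap_ip_left g)).concaveOn convex_univ
    obtain ⟨_, ⟨i, hi, rfl⟩, hle⟩ := hconc.exists_le_of_mem_convexHull (Set.subset_univ _) hp
    exact (K.inf'_le _ hi).trans hle

end

theorem stmt13_general {Ω : Type*} [Fintype Ω]
    (K : Finset (Ω → ℝ)) (hK : K.Nonempty) (b : (Ω → ℝ) → ℝ)
    (M : Set (Ω → ℝ)) (hM : M = {p | IsPMV p ∧ ∀ g ∈ K, b g ≤ ip p g})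
    (lE : (Ω → ℝ) → ℝ)
    (hlE : ∀ h : Ω → ℝ, IsLeast {r : ℝ | ∃ p ∈ M, r = ip p h} (lE h))
    (hcoh : ∀ g ∈ K, lE g = b g) :
    ∀ h : Ω → ℝ, ∃ (M' : Set (Ω → ℝ)) (lP' : (Ω → ℝ) → ℝ),
      M'.Nonempty ∧ IsCompact M' ∧ Convex ℝ M' ∧ (∀ p ∈ M', IsPMV p) ∧
      (∀ g : Ω → ℝ, IsLeast {r : ℝ | ∃ p ∈ M', r = ip p g} (lP' g)) ∧
      (∀ g ∈ K, lP' g = b g) ∧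
      lP' h = sInf {r : ℝ | ∃ f ∈ K,
        r = sSup {s : ℝ | ∃ p ∈ {q ∈ M | ip q f = lE f}, s = ip p h}} := by
  intro h
  have hMcompact : IsCompact M := hM ▸ isCompact_credalSet (K : Set (Ω → ℝ)) b
  have hface : ∀ f, ∃ p ∈ {q ∈ M | ip q f = lE f},
      IsGreatest {r | ∃ q ∈ {q ∈ M | ip q f = lE f}, r = ip q h} (ip p h) := fun f =>
    have ⟨p, hp, hpf⟩ := (hlE f).1
    exists_isGreatest_ip_of_isCompact
      (hMcompact.inter_right (isClosed_eq (continuous_ip_left f) continuous_const))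
      ⟨p, hp, hpf.symm⟩ h
  choose P hPface hPmax using hface
  have hPsimplex : P '' K ⊆ stdSimplex ℝ Ω := by
    rintro _ ⟨f, -, rfl⟩
    exact (hM.subset (hPface f).1).1
  refine ⟨convexHull ℝ (P '' K), fun g => K.inf' hK fun f => ip (P f) g,
    (hK.to_set.image P).convexHull (𝕜 := ℝ),
    (K.finite_toSet.image P).isCompact_convexHull (𝕜 := ℝ),
    convex_convexHull ℝ _, convexHull_min hPsimplex (convex_stdSimplex ℝ Ω),
    isLeast_ip_convexHull K hK P, fun g hg => ?_, ?_⟩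
  · refine le_antisymm (K.inf'_le_of_le _ hg ?_)
      (Finset.le_inf' hK _ fun f _ => (hM.subset (hPface f).1).2 g hg)
    rw [(hPface g).2, hcoh g hg]
  · simp only [fun f => (hPmax f).csSup_eq, K.inf'_eq_csInf_image hK]
    congr 1
    ext r
    simp only [Set.mem_image, Finset.mem_coe, Set.mem_ofPred_eq, eq_comm]

/-- for every gamble `h` there is an extension `P̲'` of the coherent
assessment `(K, b)` attaining the bound `P̲'(h) = min_{f ∈ K} max_{p ∈ M_f} ⟨p, h⟩`. -/
theorem stmt13 {Ω : Type*} [Fintype Ω] [Nonempty Ω]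
    (K : Finset (Ω → ℝ)) (hK : K.Nonempty) (b : (Ω → ℝ) → ℝ)
    (M : Set (Ω → ℝ)) (hM : M = {p | IsPMV p ∧ ∀ g ∈ K, b g ≤ ip p g})
    (hMne : M.Nonempty)
    (lE : (Ω → ℝ) → ℝ)
    (hlE : ∀ h : Ω → ℝ, IsLeast {r : ℝ | ∃ p ∈ M, r = ip p h} (lE h))
    (hcoh : ∀ g ∈ K, lE g = b g) :
    ∀ h : Ω → ℝ, ∃ (M' : Set (Ω → ℝ)) (lP' : (Ω → ℝ) → ℝ),
      M'.Nonempty ∧ IsCompact M' ∧ Convex ℝ M' ∧ (∀ p ∈ M', IsPMV p) ∧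
      (∀ g : Ω → ℝ, IsLeast {r : ℝ | ∃ p ∈ M', r = ip p g} (lP' g)) ∧
      (∀ g ∈ K, lP' g = b g) ∧
      lP' h = sInf {r : ℝ | ∃ f ∈ K,
        r = sSup {s : ℝ | ∃ p ∈ {q ∈ M | ip q f = lE f}, s = ip p h}} :=
  stmt13_general K hK b M hM lE hlE hcoh
end
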